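/- arXiv:1510.07270 — 7 statements merged into one kernel-verified Lean document; each statement's English description precedes it below -/
import Mathlib

section
/- The expression l₂(s₁,s₂,s₃) := Δ(s₁,s₂) ∧ Δ(s₂,s₃) + Δ(s₂,s₃) ∧ Δ(s₁,s₃) + Δ(s₁,s₃) ∧ Δ(s₁,s₂) ∈ Λ²F* does not depend on the choice of the volume form ω used to define Δ. -/
open ExteriorAlgebra

/-- The wedge `a ∧ b` of two units of a field, in the exterior square (over `ℤ`)
of the multiplicative group `F*` written additively. -/
noncomputable def wedgeU {F : Type*} [Field F] (a b : Fˣ) :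
    ExteriorAlgebra ℤ (Additive Fˣ) :=
  ExteriorAlgebra.ι ℤ (Additive.ofMul a) * ExteriorAlgebra.ι ℤ (Additive.ofMul b)

/-- `l₂(s₁,s₂,s₃) = Δ(s₁,s₂) ∧ Δ(s₂,s₃) + Δ(s₂,s₃) ∧ Δ(s₁,s₃) + Δ(s₁,s₃) ∧ Δ(s₁,s₂)`,
expressed in terms of `d12 = Δ(s₁,s₂)`, `d23 = Δ(s₂,s₃)`, `d13 = Δ(s₁,s₃)`. -/
noncomputable def l2 {F : Type*} [Field F] (d12 d23 d13 : Fˣ) :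
    ExteriorAlgebra ℤ (Additive Fˣ) :=
  wedgeU d12 d23 + wedgeU d23 d13 + wedgeU d13 d12

lemma l2_mul_left {F : Type*} [Field F] (u a b c : Fˣ) :
    l2 (u * a) (u * b) (u * c) = l2 a b c := by
  simp only [l2, wedgeU, ofMul_mul, map_add]
  set w := ExteriorAlgebra.ι ℤ (Additive.ofMul u) with hw
  set A := ExteriorAlgebra.ι ℤ (Additive.ofMul a) with hA
  set B := ExteriorAlgebra.ι ℤ (Additive.ofMul b) with hB
  set C := ExteriorAlgebra.ι ℤ (Additive.ofMul c) with hC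
  have hww : w * w = 0 := ExteriorAlgebra.ι_sq_zero _
  have hswap : ∀ x : Additive Fˣ, ExteriorAlgebra.ι ℤ x * w = -(w * ExteriorAlgebra.ι ℤ x) := by
    intro x
    have := ExteriorAlgebra.ι_add_mul_swap (R := ℤ) x (Additive.ofMul u)
    rw [← hw] at this
    linear_combination (norm := noncomm_ring) this
  have hA' : A * w = -(w * A) := hswap _
  have hB' : B * w = -(w * B) := hswap _
  have hC' : C * w = -(w * C) := hswap _
  rw [add_mul, mul_add, mul_add, add_mul, mul_add, mul_add, add_mul, mul_add, mul_add,
    hww, hA', hB', hC']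
  abel

/-- `l₂(s₁,s₂,s₃) ∈ Λ²F*` does not depend on the choice of the volume form `ω`:
replacing `ω` by `λ • ω` multiplies each `Δ` by `λ`, and the element is unchanged. -/
theorem stmt5 {F V : Type*} [Field F] [AddCommGroup V] [Module F V]
    (ω : V [⋀^Fin 2]→ₗ[F] F) (lam : F) (hlam : lam ≠ 0)
    (s1 s2 s3 : V)
    (h12 : ω ![s1, s2] ≠ 0) (h23 : ω ![s2, s3] ≠ 0) (h13 : ω ![s1, s3] ≠ 0)
    (h12' : (lam • ω) ![s1, s2] ≠ 0) (h23' : (lam • ω) ![s2, s3] ≠ 0)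
    (h13' : (lam • ω) ![s1, s3] ≠ 0) :
    l2 (Units.mk0 ((lam • ω) ![s1, s2]) h12') (Units.mk0 ((lam • ω) ![s2, s3]) h23')
        (Units.mk0 ((lam • ω) ![s1, s3]) h13')
      = l2 (Units.mk0 (ω ![s1, s2]) h12) (Units.mk0 (ω ![s2, s3]) h23)
          (Units.mk0 (ω ![s1, s3]) h13) := by
  have e : ∀ (v : Fin 2 → V) (h : (lam • ω) v ≠ 0) (h' : ω v ≠ 0),
      Units.mk0 ((lam • ω) v) h = Units.mk0 lam hlam * Units.mk0 (ω v) h' := by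
    intro v h h'
    ext
    simp [AlternatingMap.smul_apply, smul_eq_mul]
  rw [e _ h12' h12, e _ h23' h23, e _ h13' h13, l2_mul_left]
end

section
/- In the additive group F* ⊗ F* modulo the subgroup generated by Steinberg elements (1-x) ⊗ x (x ∈ F* \ {1}), every element of the form x ⊗ y + y ⊗ x vanishes; i.e. x ⊗ y + y ⊗ x is a sum of Steinberg relations for all x, y ∈ F* \ {1} with xy ≠ 1. -/
open TensorProduct

/-- The set of Steinberg elements `(1-x) ⊗ x`, `x ∈ F* \ {1}`, inside
`F* ⊗_ℤ F*` (multiplicative groups written additively). -/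
def steinbergSet (F : Type*) [Field F] :
    Set ((Additive Fˣ) ⊗[ℤ] (Additive Fˣ)) :=
  {t | ∃ (x : F) (hx : x ≠ 0) (hx1 : (1 : F) - x ≠ 0), x ≠ 1 ∧
    t = (Additive.ofMul (Units.mk0 ((1 : F) - x) hx1)) ⊗ₜ[ℤ]
          (Additive.ofMul (Units.mk0 x hx))}

lemma steinberg_aux {F : Type*} [Field F] (z : F) (hz : z ≠ 0) (hz1 : z ≠ 1) :
    (Additive.ofMul (Units.mk0 z hz)) ⊗ₜ[ℤ]
      (Additive.ofMul (Units.mk0 (-z) (neg_ne_zero.mpr hz)))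
      ∈ AddSubgroup.closure (steinbergSet F) := by
  have hzi : z⁻¹ ≠ 0 := inv_ne_zero hz
  have hzi1 : z⁻¹ ≠ 1 := by
    rw [ne_eq, inv_eq_one]; exact hz1
  have h1 : (1 : F) - z ≠ 0 := sub_ne_zero.mpr (Ne.symm hz1)
  have h2 : (1 : F) - z⁻¹ ≠ 0 := sub_ne_zero.mpr (Ne.symm hzi1)
  have h1' : (1 : F) - (1 - z) ≠ 0 := by simpa using hz
  have h2' : (1 : F) - (1 - z⁻¹) ≠ 0 := by simpa using hzi
  have h1ne1 : (1 : F) - z ≠ 1 := by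
    intro h; apply hz; linear_combination -h
  have h2ne1 : (1 : F) - z⁻¹ ≠ 1 := by
    intro h; apply hzi; linear_combination -h
  -- generator 1 : x := 1 - z
  have g1 : (Additive.ofMul (Units.mk0 ((1:F) - (1 - z)) h1')) ⊗ₜ[ℤ]
      (Additive.ofMul (Units.mk0 ((1:F) - z) h1)) ∈ AddSubgroup.closure (steinbergSet F) :=
    AddSubgroup.subset_closure ⟨1 - z, h1, h1', h1ne1, rfl⟩
  -- generator 2 : x := 1 - z⁻¹
  have g2 : (Additive.ofMul (Units.mk0 ((1:F) - (1 - z⁻¹)) h2')) ⊗ₜ[ℤ]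
      (Additive.ofMul (Units.mk0 ((1:F) - z⁻¹) h2)) ∈ AddSubgroup.closure (steinbergSet F) :=
    AddSubgroup.subset_closure ⟨1 - z⁻¹, h2, h2', h2ne1, rfl⟩
  have key :
      (Additive.ofMul (Units.mk0 z hz)) ⊗ₜ[ℤ]
        (Additive.ofMul (Units.mk0 (-z) (neg_ne_zero.mpr hz)))
      = (Additive.ofMul (Units.mk0 ((1:F) - (1 - z)) h1')) ⊗ₜ[ℤ]
          (Additive.ofMul (Units.mk0 ((1:F) - z) h1))
        + (Additive.ofMul (Units.mk0 ((1:F) - (1 - z⁻¹)) h2')) ⊗ₜ[ℤ]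
            (Additive.ofMul (Units.mk0 ((1:F) - z⁻¹) h2)) := by
    have eu1 : Units.mk0 ((1:F) - (1 - z)) h1' = Units.mk0 z hz :=
      Units.ext (by simp)
    have eu2 : Units.mk0 ((1:F) - (1 - z⁻¹)) h2' = (Units.mk0 z hz)⁻¹ :=
      Units.ext (by simp)
    have eu3 : Units.mk0 (-z) (neg_ne_zero.mpr hz)
        = Units.mk0 ((1:F) - z) h1 * (Units.mk0 ((1:F) - z⁻¹) h2)⁻¹ :=
      Units.ext (by
        simp only [Units.val_mul, Units.val_mk0, Units.val_inv_eq_inv_val]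
        rw [eq_mul_inv_iff_mul_eq₀ h2, mul_sub, neg_mul, neg_mul, mul_inv_cancel₀ hz]
        ring_nf)
    rw [eu1, eu2, eu3, ofMul_mul, ofMul_inv, ofMul_inv, tmul_add, tmul_neg, neg_tmul]
  rw [key]
  exact AddSubgroup.add_mem _ g1 g2

/-- In `F* ⊗ F*` modulo the Steinberg subgroup, `x ⊗ y + y ⊗ x` vanishes:
it lies in the subgroup generated by the Steinberg elements. -/
theorem stmt6 {F : Type*} [Field F] (x y : F)
    (hx : x ≠ 0) (hy : y ≠ 0) (hx1 : x ≠ 1) (hy1 : y ≠ 1) (hxy : x * y ≠ 1) :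
    (Additive.ofMul (Units.mk0 x hx)) ⊗ₜ[ℤ] (Additive.ofMul (Units.mk0 y hy))
      + (Additive.ofMul (Units.mk0 y hy)) ⊗ₜ[ℤ] (Additive.ofMul (Units.mk0 x hx))
      ∈ AddSubgroup.closure (steinbergSet F) := by
  have hxy0 : x * y ≠ 0 := mul_ne_zero hx hy
  have h1 := steinberg_aux (x * y) hxy0 hxy
  have h2 := steinberg_aux x hx hx1
  have h3 := steinberg_aux y hy hy1
  set a : Additive Fˣ := Additive.ofMul (Units.mk0 x hx) with ha
  set b : Additive Fˣ := Additive.ofMul (Units.mk0 y hy) with hb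
  set a' : Additive Fˣ := Additive.ofMul (Units.mk0 (-x) (neg_ne_zero.mpr hx)) with ha'
  set b' : Additive Fˣ := Additive.ofMul (Units.mk0 (-y) (neg_ne_zero.mpr hy)) with hb'
  set c : Additive Fˣ := Additive.ofMul (Units.mk0 (-(x*y)) (neg_ne_zero.mpr hxy0)) with hc
  have e1 : Additive.ofMul (Units.mk0 (x*y) hxy0) = a + b := by
    rw [ha, hb, ← ofMul_mul]
    congr 1
    exact Units.ext (by simp)
  have e2 : c = a' + b := by
    rw [hc, ha', hb, ← ofMul_mul]
    congr 1
    exact Units.ext (by simp)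
  have e3 : c = a + b' := by
    rw [hc, ha, hb', ← ofMul_mul]
    congr 1
    exact Units.ext (by simp [mul_comm])
  have key : a ⊗ₜ[ℤ] b + b ⊗ₜ[ℤ] a
      = (Additive.ofMul (Units.mk0 (x*y) hxy0)) ⊗ₜ[ℤ] c - a ⊗ₜ[ℤ] a' - b ⊗ₜ[ℤ] b' := by
    rw [e1, add_tmul]
    have t1 : a ⊗ₜ[ℤ] c = a ⊗ₜ[ℤ] a' + a ⊗ₜ[ℤ] b := by rw [e2, tmul_add]
    have t2 : b ⊗ₜ[ℤ] c = b ⊗ₜ[ℤ] a + b ⊗ₜ[ℤ] b' := by rw [e3, tmul_add]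
    rw [t1, t2]
    abel
  rw [key]
  exact AddSubgroup.sub_mem _ (AddSubgroup.sub_mem _ h1 h2) h3
end

section
/- The five-term relation lies in the kernel of the Bloch differential: for five distinct points s₁,...,s₅ ∈ ℙ¹(F), the element Σ_{i=1}^5 (-1)^i {r(s₁,...,ŝᵢ,...,s₅)} of ℤ[F* \ {1}] is mapped to zero by δ: {x} ↦ (1-x) ∧ x ∈ Λ²F*. -/
open ExteriorAlgebra

/-- The cross-ratio `r(a,b,c,d) = ((a-d)(b-c))/((a-c)(b-d))`. -/
def crossRatio {F : Type*} [Field F] (a b c d : F) : F :=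
  ((a - d) * (b - c)) / ((a - c) * (b - d))

/-- The cross-ratio `r(s₁, ..., ŝᵢ, ..., s₅)` of the four points obtained from
five points by omitting the `i`-th one. -/
def cr {F : Type*} [Field F] (s : Fin 5 → F) (i : Fin 5) : F :=
  crossRatio (s (i.succAbove 0)) (s (i.succAbove 1)) (s (i.succAbove 2)) (s (i.succAbove 3))

lemma ofMul_mk0_div {F : Type*} [Field F] {v x y z w : F} (hv : v ≠ 0) (hx : x ≠ 0)
    (hy : y ≠ 0) (hz : z ≠ 0) (hw : w ≠ 0) (h : v = x * y / (z * w)) :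
    (Additive.ofMul (Units.mk0 v hv)) =
      Additive.ofMul (Units.mk0 x hx) + Additive.ofMul (Units.mk0 y hy) -
        Additive.ofMul (Units.mk0 z hz) - Additive.ofMul (Units.mk0 w hw) := by
  subst h
  have : Units.mk0 (x * y / (z * w)) hv =
      Units.mk0 x hx * Units.mk0 y hy / Units.mk0 z hz / Units.mk0 w hw := by
    ext
    simp [div_div]
  rw [this, ofMul_div, ofMul_div, ofMul_mul]

lemma one_sub_crossRatio {F : Type*} [Field F] {a b c d : F} (hac : a - c ≠ 0)
    (hbd : b - d ≠ 0) :
    1 - crossRatio a b c d = (a - b) * (c - d) / ((a - c) * (b - d)) := by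
  unfold crossRatio
  field_simp
  ring

set_option maxHeartbeats 1000000 in
theorem key5 {M : Type*} [AddCommGroup M] (e01 e02 e03 e04 e12 e13 e14 e23 e24 e34 : M) :
    ((-1 : ℤ) ^ (0 + 1)) • (ι ℤ (e12 + e34 - e13 - e24) * ι ℤ (e14 + e23 - e13 - e24)) +
      ((-1 : ℤ) ^ (1 + 1)) • (ι ℤ (e02 + e34 - e03 - e24) * ι ℤ (e04 + e23 - e03 - e24)) +
      ((-1 : ℤ) ^ (2 + 1)) • (ι ℤ (e01 + e34 - e03 - e14) * ι ℤ (e04 + e13 - e03 - e14)) +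
      ((-1 : ℤ) ^ (3 + 1)) • (ι ℤ (e01 + e24 - e02 - e14) * ι ℤ (e04 + e12 - e02 - e14)) +
      ((-1 : ℤ) ^ (4 + 1)) • (ι ℤ (e01 + e23 - e02 - e13) * ι ℤ (e03 + e12 - e02 - e13))
      = (0 : ExteriorAlgebra ℤ M) := by
  norm_num
  try simp only [neg_smul, one_smul]
  have hsw : ∀ x y : M, ι ℤ x * ι ℤ y = -(ι ℤ y * ι ℤ x) := fun x y =>
    eq_neg_of_add_eq_zero_left (ι_add_mul_swap x y)
  have hz : ∀ x : M, ι ℤ (M := M) x * ι ℤ x = 0 := ι_sq_zero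
  simp only [map_add, map_sub, mul_add, add_mul, mul_sub, sub_mul, neg_mul, mul_neg]
  rw [hz e02]
  rw [hz e03]
  rw [hz e13]
  rw [hz e14]
  rw [hz e24]
  rw [show ι ℤ (M := M) e13 * ι ℤ e02 = -(ι ℤ e02 * ι ℤ e13) from hsw _ _]
  rw [show ι ℤ (M := M) e13 * ι ℤ e03 = -(ι ℤ e03 * ι ℤ e13) from hsw _ _]
  rw [show ι ℤ (M := M) e13 * ι ℤ e12 = -(ι ℤ e12 * ι ℤ e13) from hsw _ _]
  rw [show ι ℤ (M := M) e14 * ι ℤ e02 = -(ι ℤ e02 * ι ℤ e14) from hsw _ _]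
  rw [show ι ℤ (M := M) e14 * ι ℤ e03 = -(ι ℤ e03 * ι ℤ e14) from hsw _ _]
  rw [show ι ℤ (M := M) e14 * ι ℤ e04 = -(ι ℤ e04 * ι ℤ e14) from hsw _ _]
  rw [show ι ℤ (M := M) e14 * ι ℤ e12 = -(ι ℤ e12 * ι ℤ e14) from hsw _ _]
  rw [show ι ℤ (M := M) e14 * ι ℤ e13 = -(ι ℤ e13 * ι ℤ e14) from hsw _ _]
  rw [show ι ℤ (M := M) e23 * ι ℤ e02 = -(ι ℤ e02 * ι ℤ e23) from hsw _ _]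
  rw [show ι ℤ (M := M) e23 * ι ℤ e03 = -(ι ℤ e03 * ι ℤ e23) from hsw _ _]
  rw [show ι ℤ (M := M) e23 * ι ℤ e12 = -(ι ℤ e12 * ι ℤ e23) from hsw _ _]
  rw [show ι ℤ (M := M) e23 * ι ℤ e13 = -(ι ℤ e13 * ι ℤ e23) from hsw _ _]
  rw [show ι ℤ (M := M) e24 * ι ℤ e02 = -(ι ℤ e02 * ι ℤ e24) from hsw _ _]
  rw [show ι ℤ (M := M) e24 * ι ℤ e03 = -(ι ℤ e03 * ι ℤ e24) from hsw _ _]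
  rw [show ι ℤ (M := M) e24 * ι ℤ e04 = -(ι ℤ e04 * ι ℤ e24) from hsw _ _]
  rw [show ι ℤ (M := M) e24 * ι ℤ e12 = -(ι ℤ e12 * ι ℤ e24) from hsw _ _]
  rw [show ι ℤ (M := M) e24 * ι ℤ e13 = -(ι ℤ e13 * ι ℤ e24) from hsw _ _]
  rw [show ι ℤ (M := M) e24 * ι ℤ e14 = -(ι ℤ e14 * ι ℤ e24) from hsw _ _]
  rw [show ι ℤ (M := M) e24 * ι ℤ e23 = -(ι ℤ e23 * ι ℤ e24) from hsw _ _]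
  rw [show ι ℤ (M := M) e34 * ι ℤ e03 = -(ι ℤ e03 * ι ℤ e34) from hsw _ _]
  rw [show ι ℤ (M := M) e34 * ι ℤ e04 = -(ι ℤ e04 * ι ℤ e34) from hsw _ _]
  rw [show ι ℤ (M := M) e34 * ι ℤ e13 = -(ι ℤ e13 * ι ℤ e34) from hsw _ _]
  rw [show ι ℤ (M := M) e34 * ι ℤ e14 = -(ι ℤ e14 * ι ℤ e34) from hsw _ _]
  rw [show ι ℤ (M := M) e34 * ι ℤ e23 = -(ι ℤ e23 * ι ℤ e34) from hsw _ _]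
  rw [show ι ℤ (M := M) e34 * ι ℤ e24 = -(ι ℤ e24 * ι ℤ e34) from hsw _ _]
  abel


/-- The five-term relation lies in the kernel of the Bloch differential
`δ : {x} ↦ (1-x) ∧ x ∈ Λ²F*`: the alternating sum
`Σᵢ (-1)^i (1 - r(...ŝᵢ...)) ∧ r(...ŝᵢ...)` vanishes. -/
theorem stmt7 {F : Type*} [Field F] (s : Fin 5 → F) (hs : Function.Injective s)
    (h0 : ∀ i, cr s i ≠ 0) (h1 : ∀ i, (1 : F) - cr s i ≠ 0) :
    ∑ i : Fin 5, ((-1 : ℤ) ^ ((i : ℕ) + 1)) •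
        (ExteriorAlgebra.ι ℤ (Additive.ofMul (Units.mk0 ((1 : F) - cr s i) (h1 i))) *
         ExteriorAlgebra.ι ℤ (Additive.ofMul (Units.mk0 (cr s i) (h0 i))))
      = 0 := by
  have hne : ∀ j k : Fin 5, j ≠ k → s j - s k ≠ 0 := fun j k h => sub_ne_zero.mpr (hs.ne h)
  have hA0 : Additive.ofMul (Units.mk0 ((1:F) - cr s 0) (h1 0)) =
      (Additive.ofMul (Units.mk0 (s 1 - s 2) (hne 1 2 (by decide)))) + (Additive.ofMul (Units.mk0 (s 3 - s 4) (hne 3 4 (by decide)))) - (Additive.ofMul (Units.mk0 (s 1 - s 3) (hne 1 3 (by decide)))) - (Additive.ofMul (Units.mk0 (s 2 - s 4) (hne 2 4 (by decide)))) := by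
    refine ofMul_mk0_div _ _ _ _ _ ?_
    show (1:F) - crossRatio (s 1) (s 2) (s 3) (s 4) = _
    exact one_sub_crossRatio (hne 1 3 (by decide)) (hne 2 4 (by decide))
  have hB0 : Additive.ofMul (Units.mk0 (cr s 0) (h0 0)) =
      (Additive.ofMul (Units.mk0 (s 1 - s 4) (hne 1 4 (by decide)))) + (Additive.ofMul (Units.mk0 (s 2 - s 3) (hne 2 3 (by decide)))) - (Additive.ofMul (Units.mk0 (s 1 - s 3) (hne 1 3 (by decide)))) - (Additive.ofMul (Units.mk0 (s 2 - s 4) (hne 2 4 (by decide)))) := ofMul_mk0_div _ _ _ _ _ rfl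
  have hA1 : Additive.ofMul (Units.mk0 ((1:F) - cr s 1) (h1 1)) =
      (Additive.ofMul (Units.mk0 (s 0 - s 2) (hne 0 2 (by decide)))) + (Additive.ofMul (Units.mk0 (s 3 - s 4) (hne 3 4 (by decide)))) - (Additive.ofMul (Units.mk0 (s 0 - s 3) (hne 0 3 (by decide)))) - (Additive.ofMul (Units.mk0 (s 2 - s 4) (hne 2 4 (by decide)))) := by
    refine ofMul_mk0_div _ _ _ _ _ ?_
    show (1:F) - crossRatio (s 0) (s 2) (s 3) (s 4) = _
    exact one_sub_crossRatio (hne 0 3 (by decide)) (hne 2 4 (by decide))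
  have hB1 : Additive.ofMul (Units.mk0 (cr s 1) (h0 1)) =
      (Additive.ofMul (Units.mk0 (s 0 - s 4) (hne 0 4 (by decide)))) + (Additive.ofMul (Units.mk0 (s 2 - s 3) (hne 2 3 (by decide)))) - (Additive.ofMul (Units.mk0 (s 0 - s 3) (hne 0 3 (by decide)))) - (Additive.ofMul (Units.mk0 (s 2 - s 4) (hne 2 4 (by decide)))) := ofMul_mk0_div _ _ _ _ _ rfl
  have hA2 : Additive.ofMul (Units.mk0 ((1:F) - cr s 2) (h1 2)) =
      (Additive.ofMul (Units.mk0 (s 0 - s 1) (hne 0 1 (by decide)))) + (Additive.ofMul (Units.mk0 (s 3 - s 4) (hne 3 4 (by decide)))) - (Additive.ofMul (Units.mk0 (s 0 - s 3) (hne 0 3 (by decide)))) - (Additive.ofMul (Units.mk0 (s 1 - s 4) (hne 1 4 (by decide)))) := by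
    refine ofMul_mk0_div _ _ _ _ _ ?_
    show (1:F) - crossRatio (s 0) (s 1) (s 3) (s 4) = _
    exact one_sub_crossRatio (hne 0 3 (by decide)) (hne 1 4 (by decide))
  have hB2 : Additive.ofMul (Units.mk0 (cr s 2) (h0 2)) =
      (Additive.ofMul (Units.mk0 (s 0 - s 4) (hne 0 4 (by decide)))) + (Additive.ofMul (Units.mk0 (s 1 - s 3) (hne 1 3 (by decide)))) - (Additive.ofMul (Units.mk0 (s 0 - s 3) (hne 0 3 (by decide)))) - (Additive.ofMul (Units.mk0 (s 1 - s 4) (hne 1 4 (by decide)))) := ofMul_mk0_div _ _ _ _ _ rfl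
  have hA3 : Additive.ofMul (Units.mk0 ((1:F) - cr s 3) (h1 3)) =
      (Additive.ofMul (Units.mk0 (s 0 - s 1) (hne 0 1 (by decide)))) + (Additive.ofMul (Units.mk0 (s 2 - s 4) (hne 2 4 (by decide)))) - (Additive.ofMul (Units.mk0 (s 0 - s 2) (hne 0 2 (by decide)))) - (Additive.ofMul (Units.mk0 (s 1 - s 4) (hne 1 4 (by decide)))) := by
    refine ofMul_mk0_div _ _ _ _ _ ?_
    show (1:F) - crossRatio (s 0) (s 1) (s 2) (s 4) = _
    exact one_sub_crossRatio (hne 0 2 (by decide)) (hne 1 4 (by decide))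
  have hB3 : Additive.ofMul (Units.mk0 (cr s 3) (h0 3)) =
      (Additive.ofMul (Units.mk0 (s 0 - s 4) (hne 0 4 (by decide)))) + (Additive.ofMul (Units.mk0 (s 1 - s 2) (hne 1 2 (by decide)))) - (Additive.ofMul (Units.mk0 (s 0 - s 2) (hne 0 2 (by decide)))) - (Additive.ofMul (Units.mk0 (s 1 - s 4) (hne 1 4 (by decide)))) := ofMul_mk0_div _ _ _ _ _ rfl
  have hA4 : Additive.ofMul (Units.mk0 ((1:F) - cr s 4) (h1 4)) =
      (Additive.ofMul (Units.mk0 (s 0 - s 1) (hne 0 1 (by decide)))) + (Additive.ofMul (Units.mk0 (s 2 - s 3) (hne 2 3 (by decide)))) - (Additive.ofMul (Units.mk0 (s 0 - s 2) (hne 0 2 (by decide)))) - (Additive.ofMul (Units.mk0 (s 1 - s 3) (hne 1 3 (by decide)))) := by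
    refine ofMul_mk0_div _ _ _ _ _ ?_
    show (1:F) - crossRatio (s 0) (s 1) (s 2) (s 3) = _
    exact one_sub_crossRatio (hne 0 2 (by decide)) (hne 1 3 (by decide))
  have hB4 : Additive.ofMul (Units.mk0 (cr s 4) (h0 4)) =
      (Additive.ofMul (Units.mk0 (s 0 - s 3) (hne 0 3 (by decide)))) + (Additive.ofMul (Units.mk0 (s 1 - s 2) (hne 1 2 (by decide)))) - (Additive.ofMul (Units.mk0 (s 0 - s 2) (hne 0 2 (by decide)))) - (Additive.ofMul (Units.mk0 (s 1 - s 3) (hne 1 3 (by decide)))) := ofMul_mk0_div _ _ _ _ _ rfl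
  rw [Fin.sum_univ_five, hA0, hB0, hA1, hB1, hA2, hB2, hA3, hB3, hA4, hB4]
  exact key5 _ _ _ _ _ _ _ _ _ _
end

section
/- For a unipotent upper-triangular change of basis: if M is an invertible matrix and N a rational unipotent upper-triangular matrix, then the element ⟨f^n | (MN) ⊗ (MN)^{-1} | v₀⟩ := Σ_k ⟨f^n| MN |v_k⟩ ⊗ ⟨f^k| (MN)^{-1} |v₀⟩ in ℂ ⊗_ℚ ℂ equals ⟨f^n | M ⊗ M^{-1} | v₀⟩, where the N-dependence cancels. -/
open TensorProduct Matrix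

/-- Unipotent upper-triangular change of basis: for an invertible complex matrix `M`
and a rational unipotent upper-triangular matrix `N`, the element
`⟨fⁿ|(MN) ⊗ (MN)⁻¹|v₀⟩ = Σ_k ⟨fⁿ|MN|v_k⟩ ⊗ ⟨f^k|(MN)⁻¹|v₀⟩ ∈ ℂ ⊗_ℚ ℂ`
equals `⟨fⁿ|M ⊗ M⁻¹|v₀⟩`: the `N`-dependence cancels. -/
theorem stmt13 (m : ℕ) (M : Matrix (Fin (m + 1)) (Fin (m + 1)) ℂ) (hM : IsUnit M.det)
    (N : Matrix (Fin (m + 1)) (Fin (m + 1)) ℚ)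
    (hNtri : ∀ i j : Fin (m + 1), j < i → N i j = 0)
    (hNuni : ∀ i, N i i = 1)
    (n : Fin (m + 1)) :
    ∑ k, ((M * N.map (Rat.cast : ℚ → ℂ)) n k) ⊗ₜ[ℚ]
        ((M * N.map (Rat.cast : ℚ → ℂ))⁻¹ k 0)
      = ∑ k, (M n k) ⊗ₜ[ℚ] (M⁻¹ k 0) := by
  set N' : Matrix (Fin (m + 1)) (Fin (m + 1)) ℂ := N.map (Rat.cast : ℚ → ℂ) with hN'def
  have hNdet : N.det = 1 := by
    rw [Matrix.det_of_upperTriangular (fun i j h => hNtri i j h)]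
    simp [hNuni]
  have hN' : IsUnit N'.det := by
    have : N'.det = ((N.det : ℚ) : ℂ) := (RingHom.map_det (Rat.castHom ℂ) N).symm
    rw [this, hNdet]; simp
  have hinv : (M * N')⁻¹ = N'⁻¹ * M⁻¹ := Matrix.mul_inv_rev _ _
  have key : ∀ (q : ℚ) (a b : ℂ), (a * (q : ℂ)) ⊗ₜ[ℚ] b = a ⊗ₜ[ℚ] ((q : ℂ) * b) := by
    intro q a b
    rw [mul_comm a, ← Rat.smul_def, ← Rat.smul_def, smul_tmul]
  calc ∑ k, ((M * N') n k) ⊗ₜ[ℚ] ((M * N')⁻¹ k 0)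
      = ∑ k, ∑ l, (M n l * ((N l k : ℚ) : ℂ)) ⊗ₜ[ℚ] ((N'⁻¹ * M⁻¹) k 0) := by
        simp only [hinv, Matrix.mul_apply, sum_tmul]
        rfl
    _ = ∑ l, ∑ k, M n l ⊗ₜ[ℚ] (((N l k : ℚ) : ℂ) * ((N'⁻¹ * M⁻¹) k 0)) := by
        rw [Finset.sum_comm]
        simp only [key]
    _ = ∑ l, M n l ⊗ₜ[ℚ] ((N' * (N'⁻¹ * M⁻¹)) l 0) := by
        simp only [← tmul_sum, Matrix.mul_apply]
        rfl
    _ = ∑ k, (M n k) ⊗ₜ[ℚ] (M⁻¹ k 0) := by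
        rw [← Matrix.mul_assoc, Matrix.mul_nonsing_inv _ hN', Matrix.one_mul]
end

section
/- The hypersimplices of type Δ^{p,q} (with p+q = m−1) appearing in the hypersimplicial N-decomposition of the simplex Δ^m_{(N)} = {x ∈ ℝ_{≥0}^{m+1} : Σxᵢ = N} are in bijection with partitions a = (a₀,...,a_m) of N−(q+1) into m+1 non-negative integers; the hypersimplex attached to a is (a₀,...,a_m) + Δ^{p,q} where Δ^{p,q} = {x ∈ [0,1]^{m+1} : Σxᵢ = q+1}. -/
/-- Hypersimplicial `N`-decomposition: for a partition `a = (a₀,...,a_m)` of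
`N − (q+1)` into non-negative integers, the piece of the decomposition of the
simplex `Δ^m_(N) = {x ≥ 0, Σxᵢ = N}` cut out by the unit lattice cube at `a`
is exactly the translate `a + Δ^{p,q}` of the hypersimplex
`Δ^{p,q} = {x ∈ [0,1]^{m+1} : Σxᵢ = q+1}`.  This sets up the bijection between
type-`Δ^{p,q}` pieces and partitions `a` with `Σaᵢ = N − (q+1)`. -/
theorem stmt15 (m N q : ℕ) (a : Fin (m + 1) → ℕ)
    (hsum : (∑ i, a i) + (q + 1) = N) :
    {x : Fin (m + 1) → ℝ |
        (∀ i, 0 ≤ x i) ∧ (∀ i, (a i : ℝ) ≤ x i ∧ x i ≤ (a i : ℝ) + 1) ∧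
          ∑ i, x i = (N : ℝ)}
      = (fun y : Fin (m + 1) → ℝ => fun i => (a i : ℝ) + y i) ''
          {y : Fin (m + 1) → ℝ |
            (∀ i, 0 ≤ y i ∧ y i ≤ 1) ∧ ∑ i, y i = (q : ℝ) + 1} := by
  have hN : (N : ℝ) = (∑ i, (a i : ℝ)) + ((q : ℝ) + 1) := by
    rw [← hsum]; push_cast; ring
  ext x
  constructor
  · rintro ⟨-, hbd, hsx⟩
    refine ⟨fun i => x i - a i, ⟨fun i => ⟨?_, ?_⟩, ?_⟩, ?_⟩
    · dsimp only; linarith [(hbd i).1]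
    · dsimp only; linarith [(hbd i).2]
    · have : ∑ i, (x i - (a i : ℝ)) = ∑ i, x i - ∑ i, (a i : ℝ) := by
        rw [Finset.sum_sub_distrib]
      rw [this, hsx, hN]; ring
    · funext i; simp
  · rintro ⟨y, ⟨hy, hsy⟩, rfl⟩
    refine ⟨fun i => ?_, fun i => ⟨?_, ?_⟩, ?_⟩
    · dsimp only; have h1 := (hy i).1; positivity
    · dsimp only; linarith [(hy i).1]
    · dsimp only; linarith [(hy i).2]
    · rw [Finset.sum_add_distrib, hsy, hN]
end

section
/- The *-product on Λ^{•−1}A of a commutative ring A is supercommutative: (a₀∧...∧a_m) * (b₀∧...∧b_n) = (−1)^{mn} (b₀∧...∧b_n) * (a₀∧...∧a_m), where (a₀∧...∧a_k) * (b₀∧...∧b_l) := Σ_{i,j} (−1)^{k−j+i} a₀∧...∧âᵢ∧...∧a_k∧(aᵢ·bⱼ)∧b₀∧...∧b̂ⱼ∧...∧b_l. -/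
open ExteriorAlgebra

/-- The `*`-product `(a₀∧...∧a_k) * (b₀∧...∧b_l) :=
Σ_{i,j} (−1)^{k−j+i} a₀∧...∧âᵢ∧...∧a_k ∧ (aᵢ·bⱼ) ∧ b₀∧...∧b̂ⱼ∧...∧b_l`
on the exterior algebra (over `ℚ`) of a commutative `ℚ`-algebra `A`
(the sign `(−1)^{k−j+i}` is written with the same parity as `(−1)^{k+j+i}`). -/
noncomputable def starProd {A : Type*} [CommRing A] [Algebra ℚ A] {k l : ℕ}
    (a : Fin (k + 1) → A) (b : Fin (l + 1) → A) : ExteriorAlgebra ℚ A :=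
  ∑ i : Fin (k + 1), ∑ j : Fin (l + 1),
    ((-1 : ℤ) ^ (k + (i : ℕ) + (j : ℕ))) •
      ((List.ofFn fun t : Fin k => ExteriorAlgebra.ι ℚ (a (i.succAbove t))).prod *
       ExteriorAlgebra.ι ℚ (a i * b j) *
       (List.ofFn fun t : Fin l => ExteriorAlgebra.ι ℚ (b (j.succAbove t))).prod)

section
variable {A : Type*} [CommRing A] [Algebra ℚ A]

lemma aux1 (c : A) (L : List A) :
    (L.map (ι ℚ)).prod * ι ℚ c =
      ((-1 : ℤ) ^ L.length) • (ι ℚ c * (L.map (ι ℚ)).prod) := by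
  induction L with
  | nil => simp
  | cons x L ih =>
    have hx : ι ℚ x * ι ℚ c = -(ι ℚ c * ι ℚ x) :=
      add_eq_zero_iff_eq_neg.mp (ι_add_mul_swap x c)
    calc (ι ℚ x * (L.map (ι ℚ)).prod) * ι ℚ c
        = ι ℚ x * ((L.map (ι ℚ)).prod * ι ℚ c) := by rw [mul_assoc]
      _ = ((-1 : ℤ) ^ L.length) • ((ι ℚ x * ι ℚ c) * (L.map (ι ℚ)).prod) := by
          rw [ih, mul_smul_comm, mul_assoc]
      _ = ((-1 : ℤ) ^ (L.length + 1)) • (ι ℚ c * (ι ℚ x * (L.map (ι ℚ)).prod)) := by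
          rw [hx, pow_succ]
          simp [mul_smul, mul_assoc]

lemma aux2 (L1 L2 : List A) :
    (L1.map (ι ℚ)).prod * (L2.map (ι ℚ)).prod =
      ((-1 : ℤ) ^ (L1.length * L2.length)) •
        ((L2.map (ι ℚ)).prod * (L1.map (ι ℚ)).prod) := by
  induction L2 with
  | nil => simp
  | cons c L2 ih =>
    calc (L1.map (ι ℚ)).prod * (ι ℚ c * (L2.map (ι ℚ)).prod)
        = ((L1.map (ι ℚ)).prod * ι ℚ c) * (L2.map (ι ℚ)).prod := by rw [mul_assoc]
      _ = ((-1 : ℤ) ^ L1.length) • (ι ℚ c * ((L1.map (ι ℚ)).prod * (L2.map (ι ℚ)).prod)) := by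
          rw [aux1, smul_mul_assoc, mul_assoc]
      _ = ((-1 : ℤ) ^ L1.length * (-1) ^ (L1.length * L2.length)) •
            ((ι ℚ c * (L2.map (ι ℚ)).prod) * (L1.map (ι ℚ)).prod) := by
          rw [ih, mul_smul, mul_assoc]
          congr 1
          rw [mul_smul_comm]
      _ = ((-1 : ℤ) ^ (L1.length * (L2.length + 1))) •
            ((ι ℚ c * (L2.map (ι ℚ)).prod) * (L1.map (ι ℚ)).prod) := by
          rw [← pow_add]; ring_nf

lemma aux3 (c : A) (La Lb : List A) :
    (La.map (ι ℚ)).prod * ι ℚ c * (Lb.map (ι ℚ)).prod =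
      ((-1 : ℤ) ^ (La.length + La.length * Lb.length + Lb.length)) •
        ((Lb.map (ι ℚ)).prod * ι ℚ c * (La.map (ι ℚ)).prod) := by
  have h1 : ι ℚ c * (Lb.map (ι ℚ)).prod =
      ((-1 : ℤ) ^ Lb.length) • ((Lb.map (ι ℚ)).prod * ι ℚ c) := by
    rw [aux1, smul_smul, ← pow_add, ← two_mul, pow_mul]
    norm_num
  calc (La.map (ι ℚ)).prod * ι ℚ c * (Lb.map (ι ℚ)).prod
      = ((-1 : ℤ) ^ La.length) • (ι ℚ c * ((La.map (ι ℚ)).prod * (Lb.map (ι ℚ)).prod)) := by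
        rw [aux1, smul_mul_assoc, mul_assoc]
    _ = ((-1 : ℤ) ^ La.length * (-1) ^ (La.length * Lb.length)) •
          ((ι ℚ c * (Lb.map (ι ℚ)).prod) * (La.map (ι ℚ)).prod) := by
        rw [aux2, mul_smul, mul_smul_comm, mul_assoc]
    _ = ((-1 : ℤ) ^ (La.length + La.length * Lb.length + Lb.length)) •
          ((Lb.map (ι ℚ)).prod * ι ℚ c * (La.map (ι ℚ)).prod) := by
        rw [h1, smul_mul_assoc, smul_smul, ← pow_add, ← pow_add]


end

/-- Supercommutativity of the `*`-product for a commutative ring: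
`(a₀∧...∧a_m) * (b₀∧...∧b_n) = (−1)^{mn} (b₀∧...∧b_n) * (a₀∧...∧a_m)`. -/
theorem stmt16 {A : Type*} [CommRing A] [Algebra ℚ A] {m n : ℕ}
    (a : Fin (m + 1) → A) (b : Fin (n + 1) → A) :
    starProd a b = ((-1 : ℤ) ^ (m * n)) • starProd b a := by
  unfold starProd
  rw [Finset.smul_sum, Finset.sum_comm]
  refine Finset.sum_congr rfl fun j _ => ?_
  rw [Finset.smul_sum]
  refine Finset.sum_congr rfl fun i _ => ?_
  have h := aux3 (a i * b j) (List.ofFn (fun t : Fin m => a (i.succAbove t)))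
    (List.ofFn (fun t : Fin n => b (j.succAbove t)))
  simp only [List.map_ofFn, List.length_ofFn, Function.comp_def] at h
  rw [h, smul_smul, smul_smul, mul_comm (a i) (b j)]
  congr 1
  rw [← pow_add, ← pow_add,
    show m + (i : ℕ) + (j : ℕ) + (m + m * n + n) = 2 * m + (m * n + (n + (j : ℕ) + (i : ℕ)))
      from by ring, pow_add, pow_mul]
  norm_num
end

section
/- For elements aᵢ, bⱼ of a commutative ℚ-algebra containing 2πi with the *-product defined via a*b = ab/(2πi), one has (2πi ∧ a₁ ∧ ... ∧ a_m) * (2πi ∧ b₁ ∧ ... ∧ b_n) = (m+n+1) · 2πi ∧ a₁ ∧ ... ∧ a_m ∧ b₁ ∧ ... ∧ b_n. -/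
open ExteriorAlgebra

private lemma swap_iota (x y : ℂ) :
    ExteriorAlgebra.ι ℚ x * ExteriorAlgebra.ι ℚ y
      = -(ExteriorAlgebra.ι ℚ y * ExteriorAlgebra.ι ℚ x) :=
  eq_neg_of_add_eq_zero_left (ExteriorAlgebra.ι_add_mul_swap x y)

private lemma iota_comm_ofFn {m : ℕ} (f : Fin m → ℂ) (x : ℂ) :
    ExteriorAlgebra.ι ℚ x * (List.ofFn fun t => ExteriorAlgebra.ι ℚ (f t)).prod
      = ((-1 : ℤ) ^ m) •
        ((List.ofFn fun t => ExteriorAlgebra.ι ℚ (f t)).prod * ExteriorAlgebra.ι ℚ x) := by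
  induction m with
  | zero => simp
  | succ m ih =>
    rw [List.ofFn_succ, List.prod_cons, ← mul_assoc, swap_iota, neg_mul, mul_assoc,
      ih (fun t => f t.succ)]
    rw [mul_smul_comm, pow_succ, mul_smul, neg_one_zsmul, mul_assoc, smul_neg]

private lemma iota_insert {m : ℕ} (f : Fin (m + 1) → ℂ) (i : Fin (m + 1)) :
    ExteriorAlgebra.ι ℚ (f i) *
        (List.ofFn fun t : Fin m => ExteriorAlgebra.ι ℚ (f (i.succAbove t))).prod
      = ((-1 : ℤ) ^ (i : ℕ)) •
        (List.ofFn fun t : Fin (m + 1) => ExteriorAlgebra.ι ℚ (f t)).prod := by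
  induction m with
  | zero =>
    have : i = 0 := Fin.fin_one_eq_zero i
    subst this; simp
  | succ m ih =>
    induction i using Fin.cases with
    | zero =>
      simp only [Fin.succAbove_zero_apply, Fin.val_zero, pow_zero, one_smul]
      rw [List.ofFn_succ (f := fun t : Fin (m + 2) => ExteriorAlgebra.ι ℚ (f t)), List.prod_cons]
    | succ j =>
      have h0 : (j.succ : Fin (m + 2)).succAbove 0 = 0 := Fin.succ_succAbove_zero j
      simp only [List.ofFn_succ, List.prod_cons, h0, Fin.succ_succAbove_succ]
      rw [← mul_assoc, swap_iota, neg_mul, mul_assoc, ih (fun t => f t.succ) j]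
      rw [mul_smul_comm, Fin.val_succ, pow_succ, mul_comm ((-1:ℤ)^(j:ℕ)), mul_smul,
        neg_one_zsmul,
        List.ofFn_succ (f := fun t : Fin (m + 1) => ExteriorAlgebra.ι ℚ (f t.succ)),
        List.prod_cons]

private lemma prod_mul_eq_zero {m : ℕ} (f : Fin m → ℂ) (t : Fin m) (x : ExteriorAlgebra ℚ ℂ)
    (hx : ExteriorAlgebra.ι ℚ (f t) * x = 0) :
    (List.ofFn fun s => ExteriorAlgebra.ι ℚ (f s)).prod * x = 0 := by
  induction m with
  | zero => exact t.elim0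
  | succ m ih =>
    rw [List.ofFn_succ, List.prod_cons]
    rcases Fin.eq_zero_or_eq_succ t with rfl | ⟨j, rfl⟩
    · rw [iota_comm_ofFn (fun s => f s.succ) (f 0), smul_mul_assoc, mul_assoc, hx,
        mul_zero, smul_zero]
    · rw [mul_assoc, ih (fun s => f s.succ) j hx, mul_zero]


/-- The `*`-product on `Λ^•ℂ` (exterior algebra of `ℂ` over `ℚ`) with the
normalisation `a * b = ab/(2πi)`:
`(a₀∧...∧a_k) * (b₀∧...∧b_l) =
Σ_{i,j}(−1)^{k−j+i} a₀∧...∧âᵢ∧...∧a_k ∧ (aᵢbⱼ/2πi) ∧ b₀∧...∧b̂ⱼ∧...∧b_l`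
(the sign is written with the same parity as `(−1)^{k+j+i}`). -/
noncomputable def starC {k l : ℕ} (a : Fin (k + 1) → ℂ) (b : Fin (l + 1) → ℂ) :
    ExteriorAlgebra ℚ ℂ :=
  ∑ i : Fin (k + 1), ∑ j : Fin (l + 1),
    ((-1 : ℤ) ^ (k + (i : ℕ) + (j : ℕ))) •
      ((List.ofFn fun t : Fin k => ExteriorAlgebra.ι ℚ (a (i.succAbove t))).prod *
       ExteriorAlgebra.ι ℚ (a i * b j / (2 * (Real.pi : ℂ) * Complex.I)) *
       (List.ofFn fun t : Fin l => ExteriorAlgebra.ι ℚ (b (j.succAbove t))).prod)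

set_option maxHeartbeats 1600000 in
/-- `(2πi ∧ a₁ ∧ ... ∧ a_m) * (2πi ∧ b₁ ∧ ... ∧ b_n)
    = (m+n+1) · 2πi ∧ a₁ ∧ ... ∧ a_m ∧ b₁ ∧ ... ∧ b_n`. -/
theorem stmt17 {m n : ℕ} (a : Fin m → ℂ) (b : Fin n → ℂ) :
    starC (Fin.cons (2 * (Real.pi : ℂ) * Complex.I) a)
        (Fin.cons (2 * (Real.pi : ℂ) * Complex.I) b)
      = ((m : ℤ) + n + 1) •
        (ExteriorAlgebra.ι ℚ (2 * (Real.pi : ℂ) * Complex.I) *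
         (List.ofFn fun i : Fin m => ExteriorAlgebra.ι ℚ (a i)).prod *
         (List.ofFn fun j : Fin n => ExteriorAlgebra.ι ℚ (b j)).prod) := by
  simp only [starC]
  set τ := 2 * (Real.pi : ℂ) * Complex.I with hτd
  set g : Fin (m + 1) → ℂ := Fin.cons τ a with hg
  set gb : Fin (n + 1) → ℂ := Fin.cons τ b with hgb
  set La := (List.ofFn fun i : Fin m => ExteriorAlgebra.ι ℚ (a i)).prod with hLa
  set Lb := (List.ofFn fun j : Fin n => ExteriorAlgebra.ι ℚ (b j)).prod with hLb
  have hτ0 : τ ≠ 0 := by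
    rw [hτd]
    exact mul_ne_zero (mul_ne_zero two_ne_zero (Complex.ofReal_ne_zero.mpr Real.pi_ne_zero))
      Complex.I_ne_zero
  have sqm : ∀ k : ℕ, ((-1 : ℤ) ^ k) * ((-1 : ℤ) ^ k) = 1 := fun k => by
    rw [← pow_add]; exact Even.neg_one_pow ⟨k, rfl⟩
  have hg0 : g 0 = τ := by rw [hg, Fin.cons_zero]
  have hgs : ∀ i : Fin m, g i.succ = a i := fun i => by rw [hg, Fin.cons_succ]
  have hgb0 : gb 0 = τ := by rw [hgb, Fin.cons_zero]
  have hgbs : ∀ j : Fin n, gb j.succ = b j := fun j => by rw [hgb, Fin.cons_succ]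
  have hA0 : (List.ofFn fun t : Fin m =>
      ExteriorAlgebra.ι ℚ (g ((0 : Fin (m + 1)).succAbove t))).prod = La := by
    rw [hLa]; congr 1
  have hB0 : (List.ofFn fun t : Fin n =>
      ExteriorAlgebra.ι ℚ (gb ((0 : Fin (n + 1)).succAbove t))).prod = Lb := by
    rw [hLb]; congr 1
  have hfull_a : (List.ofFn fun t : Fin (m + 1) =>
      ExteriorAlgebra.ι ℚ (g t)).prod = ExteriorAlgebra.ι ℚ τ * La := by
    rw [List.ofFn_succ, List.prod_cons, hg0, hLa]
    congr 1
  have hfull_b : (List.ofFn fun t : Fin (n + 1) =>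
      ExteriorAlgebra.ι ℚ (gb t)).prod = ExteriorAlgebra.ι ℚ τ * Lb := by
    rw [List.ofFn_succ, List.prod_cons, hgb0, hLb]
    congr 1
  have hins_a : ∀ i : Fin m,
      ExteriorAlgebra.ι ℚ (a i) *
        (List.ofFn fun t : Fin m => ExteriorAlgebra.ι ℚ (g (i.succ.succAbove t))).prod
      = ((-1 : ℤ) ^ ((i : ℕ) + 1)) • (ExteriorAlgebra.ι ℚ τ * La) := fun i => by
    have h := iota_insert g i.succ
    rw [hgs, Fin.val_succ, hfull_a] at h
    exact h
  have hins_b : ∀ j : Fin n,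
      ExteriorAlgebra.ι ℚ (b j) *
        (List.ofFn fun t : Fin n => ExteriorAlgebra.ι ℚ (gb (j.succ.succAbove t))).prod
      = ((-1 : ℤ) ^ ((j : ℕ) + 1)) • (ExteriorAlgebra.ι ℚ τ * Lb) := fun j => by
    have h := iota_insert gb j.succ
    rw [hgbs, Fin.val_succ, hfull_b] at h
    exact h
  have hτLa : La * ExteriorAlgebra.ι ℚ τ = ((-1 : ℤ) ^ m) • (ExteriorAlgebra.ι ℚ τ * La) := by
    have h := iota_comm_ofFn a τ
    rw [← hLa] at h
    rw [h, smul_smul, sqm, one_smul]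
  rw [Fin.sum_univ_succ]
  have h0 : (∑ j : Fin (n + 1),
        (-1 : ℤ) ^ (m + ((0 : Fin (m + 1)) : ℕ) + (j : ℕ)) •
          ((List.ofFn fun t : Fin m =>
              ExteriorAlgebra.ι ℚ (g ((0 : Fin (m + 1)).succAbove t))).prod *
            ExteriorAlgebra.ι ℚ (g 0 * gb j / τ) *
            (List.ofFn fun t : Fin n =>
              ExteriorAlgebra.ι ℚ (gb (j.succAbove t))).prod))
      = ((n : ℤ) + 1) • (ExteriorAlgebra.ι ℚ τ * La * Lb) := by
    rw [Fin.sum_univ_succ]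
    have t00 : (-1 : ℤ) ^ (m + ((0 : Fin (m + 1)) : ℕ) + ((0 : Fin (n + 1)) : ℕ)) •
          ((List.ofFn fun t : Fin m =>
              ExteriorAlgebra.ι ℚ (g ((0 : Fin (m + 1)).succAbove t))).prod *
            ExteriorAlgebra.ι ℚ (g 0 * gb 0 / τ) *
            (List.ofFn fun t : Fin n =>
              ExteriorAlgebra.ι ℚ (gb ((0 : Fin (n + 1)).succAbove t))).prod)
        = ExteriorAlgebra.ι ℚ τ * La * Lb := by
      rw [hA0, hB0, hg0, hgb0, mul_div_assoc, div_self hτ0, mul_one, hτLa,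
        smul_mul_assoc, smul_smul]
      simp only [Fin.val_zero, add_zero, sqm, one_smul]
    have t0s : ∀ j : Fin n,
        (-1 : ℤ) ^ (m + ((0 : Fin (m + 1)) : ℕ) + ((j.succ : Fin (n + 1)) : ℕ)) •
          ((List.ofFn fun t : Fin m =>
              ExteriorAlgebra.ι ℚ (g ((0 : Fin (m + 1)).succAbove t))).prod *
            ExteriorAlgebra.ι ℚ (g 0 * gb j.succ / τ) *
            (List.ofFn fun t : Fin n =>
              ExteriorAlgebra.ι ℚ (gb (j.succ.succAbove t))).prod)
        = ExteriorAlgebra.ι ℚ τ * La * Lb := by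
      intro j
      rw [hA0, hg0, hgbs, mul_div_cancel_left₀ _ hτ0, mul_assoc,
        hins_b j, mul_smul_comm, ← mul_assoc, hτLa, smul_mul_assoc, smul_smul, smul_smul]
      have hc : (-1 : ℤ) ^ (m + ((0 : Fin (m + 1)) : ℕ) + ((j.succ : Fin (n + 1)) : ℕ)) *
          (-1 : ℤ) ^ ((j : ℕ) + 1) * (-1 : ℤ) ^ m = 1 := by
        simp only [Fin.val_zero, add_zero, Fin.val_succ, ← pow_add]
        exact Even.neg_one_pow ⟨m + j + 1, by ring⟩
      rw [hc, one_smul]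
    rw [t00, Finset.sum_congr rfl fun j _ => t0s j, Finset.sum_const, Finset.card_univ,
      Fintype.card_fin, add_smul, one_smul, Nat.cast_smul_eq_nsmul, add_comm]
  have hs : ∀ i : Fin m, (∑ j : Fin (n + 1),
        (-1 : ℤ) ^ (m + ((i.succ : Fin (m + 1)) : ℕ) + (j : ℕ)) •
          ((List.ofFn fun t : Fin m =>
              ExteriorAlgebra.ι ℚ (g (i.succ.succAbove t))).prod *
            ExteriorAlgebra.ι ℚ (g i.succ * gb j / τ) *
            (List.ofFn fun t : Fin n =>
              ExteriorAlgebra.ι ℚ (gb (j.succAbove t))).prod))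
      = ExteriorAlgebra.ι ℚ τ * La * Lb := by
    intro i
    rw [Fin.sum_univ_succ]
    have ts0 : (-1 : ℤ) ^ (m + ((i.succ : Fin (m + 1)) : ℕ) + ((0 : Fin (n + 1)) : ℕ)) •
          ((List.ofFn fun t : Fin m =>
              ExteriorAlgebra.ι ℚ (g (i.succ.succAbove t))).prod *
            ExteriorAlgebra.ι ℚ (g i.succ * gb 0 / τ) *
            (List.ofFn fun t : Fin n =>
              ExteriorAlgebra.ι ℚ (gb ((0 : Fin (n + 1)).succAbove t))).prod)
        = ExteriorAlgebra.ι ℚ τ * La * Lb := by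
      rw [hB0, hgs, hgb0, mul_div_cancel_right₀ _ hτ0]
      have hflip : (List.ofFn fun t : Fin m =>
            ExteriorAlgebra.ι ℚ (g (i.succ.succAbove t))).prod * ExteriorAlgebra.ι ℚ (a i)
          = ((-1 : ℤ) ^ m) • (ExteriorAlgebra.ι ℚ (a i) *
            (List.ofFn fun t : Fin m =>
              ExteriorAlgebra.ι ℚ (g (i.succ.succAbove t))).prod) := by
        rw [iota_comm_ofFn, smul_smul, sqm, one_smul]
      rw [hflip, hins_a i, smul_smul, smul_mul_assoc, smul_smul]
      have hc : (-1 : ℤ) ^ (m + ((i.succ : Fin (m + 1)) : ℕ) + ((0 : Fin (n + 1)) : ℕ)) *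
          ((-1 : ℤ) ^ m * (-1 : ℤ) ^ ((i : ℕ) + 1)) = 1 := by
        simp only [Fin.val_zero, add_zero, Fin.val_succ, ← pow_add]
        exact Even.neg_one_pow ⟨m + i + 1, by ring⟩
      rw [hc, one_smul]
    have tss : ∀ j : Fin n,
        (-1 : ℤ) ^ (m + ((i.succ : Fin (m + 1)) : ℕ) + ((j.succ : Fin (n + 1)) : ℕ)) •
          ((List.ofFn fun t : Fin m =>
              ExteriorAlgebra.ι ℚ (g (i.succ.succAbove t))).prod *
            ExteriorAlgebra.ι ℚ (g i.succ * gb j.succ / τ) *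
            (List.ofFn fun t : Fin n =>
              ExteriorAlgebra.ι ℚ (gb (j.succ.succAbove t))).prod)
        = 0 := by
      intro j
      haveI : NeZero m := ⟨i.pos.ne'⟩
      haveI : NeZero n := ⟨j.pos.ne'⟩
      have hkill : (List.ofFn fun t : Fin m =>
            ExteriorAlgebra.ι ℚ (g (i.succ.succAbove t))).prod *
          (ExteriorAlgebra.ι ℚ (g i.succ * gb j.succ / τ) *
            (List.ofFn fun t : Fin n =>
              ExteriorAlgebra.ι ℚ (gb (j.succ.succAbove t))).prod) = 0 := by
        apply prod_mul_eq_zero (fun t : Fin m => g (i.succ.succAbove t)) 0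
        show ExteriorAlgebra.ι ℚ (g (i.succ.succAbove (0 : Fin m))) * _ = 0
        rw [Fin.succ_succAbove_zero, hg0, ← mul_assoc, swap_iota, neg_mul, mul_assoc]
        have hB : ExteriorAlgebra.ι ℚ τ *
            (List.ofFn fun t : Fin n =>
              ExteriorAlgebra.ι ℚ (gb (j.succ.succAbove t))).prod = 0 := by
          have h := ExteriorAlgebra.ι_mul_prod_list (R := ℚ)
            (fun s : Fin n => gb (j.succ.succAbove s)) 0
          rw [show gb (j.succ.succAbove (0 : Fin n)) = τ by
            rw [Fin.succ_succAbove_zero, hgb0]] at h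
          exact h
        rw [hB, mul_zero, neg_zero]
      rw [← mul_assoc] at hkill
      rw [hkill, smul_zero]
    rw [ts0, Finset.sum_congr rfl fun j _ => tss j, Finset.sum_const_zero, add_zero]
  rw [h0, Finset.sum_congr rfl fun i _ => hs i, Finset.sum_const, Finset.card_univ,
    Fintype.card_fin, ← Nat.cast_smul_eq_nsmul ℤ, ← add_smul]
  congr 1
  ring
end
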